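/- arXiv:2312.01028 — 5 statements merged into one kernel-verified Lean document; each statement's English description precedes it below -/
import Mathlib

section
/- Given a finite linearly ordered set whose elements are each colored red or blue, one can select at least half of the red elements and at least half of the blue elements so that all selected elements of one color precede all selected elements of the other color. -/
/-! Take a median `m` of the red elements: at least half of the red elements lie weakly on each
side of it. Since `m` is not blue, the blue elements strictly below and strictly above `m` partition
the blue ones, so one of these two parts holds at least half of them; pair it with the red half on
the opposite side of `m`. -/

open Finset

namespace Finset

variable {α : Type*} [LinearOrder α]

lemma card_filter_le_orderEmbOfFin (s : Finset α) {k : ℕ} (h : #s = k) (i : Fin k) :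
    #(s.filter (· ≤ s.orderEmbOfFin h i)) = i + 1 := by
  have hs := map_orderEmbOfFin_univ s h
  generalize s.orderEmbOfFin h = f at hs ⊢
  subst hs
  simp only [filter_map, card_map, Function.comp_def, RelEmbedding.coe_toEmbedding,
    OrderEmbedding.le_iff_le, filter_ge_eq_Iic, Fin.card_Iic]

lemma card_filter_orderEmbOfFin_le (s : Finset α) {k : ℕ} (h : #s = k) (i : Fin k) :
    #(s.filter (s.orderEmbOfFin h i ≤ ·)) = k - i := by
  have hs := map_orderEmbOfFin_univ s h
  generalize s.orderEmbOfFin h = f at hs ⊢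
  subst hs
  simp only [filter_map, card_map, Function.comp_def, RelEmbedding.coe_toEmbedding,
    OrderEmbedding.le_iff_le, filter_le_eq_Ici, Fin.card_Ici]

lemma exists_median {s : Finset α} (hs : s.Nonempty) :
    ∃ x ∈ s, #s ≤ 2 * #(s.filter (· ≤ x)) ∧ #s ≤ 2 * #(s.filter (x ≤ ·)) := by
  have hk : (#s - 1) / 2 < #s := by have := hs.card_pos; omega
  let i : Fin #s := ⟨(#s - 1) / 2, hk⟩
  refine ⟨s.orderEmbOfFin rfl i, orderEmbOfFin_mem s rfl i, ?_, ?_⟩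
  · rw [card_filter_le_orderEmbOfFin]; simp only [i]; omega
  · rw [card_filter_orderEmbOfFin_le]; simp only [i]; omega

theorem exists_halves_separated {R B : Finset α} (hRB : Disjoint R B) :
    ∃ R' ⊆ R, ∃ B' ⊆ B, #R ≤ 2 * #R' ∧ #B ≤ 2 * #B' ∧
      ((∀ x ∈ R', ∀ y ∈ B', x < y) ∨ (∀ x ∈ B', ∀ y ∈ R', x < y)) := by
  obtain rfl | hR := R.eq_empty_or_nonempty
  · exact ⟨∅, subset_rfl, B, subset_rfl, by simp, by omega, Or.inl (by simp)⟩
  obtain ⟨m, hmR, hle, hge⟩ := exists_median hR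
  have hsplit : #(B.filter (· < m)) + #(B.filter (m < ·)) = #B := by
    rw [← card_filter_add_card_filter_not (s := B) (· < m)]
    congr 2
    refine filter_congr fun y hy => ?_
    have hym : y ≠ m := fun h => disjoint_left.mp hRB hmR (h ▸ hy)
    rw [not_lt, hym.symm.le_iff_lt]
  by_cases hB : #B ≤ 2 * #(B.filter (m < ·))
  · refine ⟨_, filter_subset _ R, _, filter_subset _ B, hle, hB, Or.inl ?_⟩
    simp only [mem_filter]
    exact fun x hx y hy => hx.2.trans_lt hy.2
  · refine ⟨_, filter_subset _ R, _, filter_subset (· < m) B, hge, by omega, Or.inr ?_⟩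
    simp only [mem_filter]
    exact fun x hx y hy => hx.2.trans_le hy.2

end Finset

theorem stmt2_general {S : Type*} [Fintype S] [LinearOrder S] (c : S → Bool) :
    ∃ R' B' : Finset S,
      R' ⊆ univ.filter (fun x => c x = true) ∧
      B' ⊆ univ.filter (fun x => c x = false) ∧
      (univ.filter (fun x => c x = true)).card ≤ 2 * R'.card ∧
      (univ.filter (fun x => c x = false)).card ≤ 2 * B'.card ∧
      ((∀ x ∈ R', ∀ y ∈ B', x < y) ∨ (∀ x ∈ B', ∀ y ∈ R', x < y)) := by
  have hdisj : Disjoint (univ.filter (fun x => c x = true)) (univ.filter (fun x => c x = false)) :=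
    disjoint_filter.mpr fun x _ h => by simp [h]
  obtain ⟨R', hR', B', hB', hRcard, hBcard, hsep⟩ := exists_halves_separated hdisj
  exact ⟨R', B', hR', hB', hRcard, hBcard, hsep⟩

/-- Given a finite linearly ordered set whose elements are each colored red (`true`) or blue
(`false`), one can select at least half of the red elements and at least half of the blue
elements so that all selected elements of one color precede all selected elements of the
other color. -/
theorem stmt2 {S : Type*} [Fintype S] [LinearOrder S] [DecidableEq S] (c : S → Bool) :
    ∃ R' B' : Finset S,
      R' ⊆ univ.filter (fun x => c x = true) ∧
      B' ⊆ univ.filter (fun x => c x = false) ∧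
      (univ.filter (fun x => c x = true)).card ≤ 2 * R'.card ∧
      (univ.filter (fun x => c x = false)).card ≤ 2 * B'.card ∧
      ((∀ x ∈ R', ∀ y ∈ B', x < y) ∨ (∀ x ∈ B', ∀ y ∈ R', x < y)) :=
  stmt2_general c
end

section
/- The depth of a complete graph on k vertices (viewed as a cograph) is ⌈log₂ k⌉. -/
/-- Cotree construction trees: a single vertex, or the disjoint union / join of two cographs. -/
inductive Cotree : Type where
  | leaf : Cotree
  | union : Cotree → Cotree → Cotree
  | join : Cotree → Cotree → Cotree

/-- The vertex type of the cograph described by a cotree. -/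
def Cotree.verts : Cotree → Type
  | .leaf => Unit
  | .union t₁ t₂ => t₁.verts ⊕ t₂.verts
  | .join t₁ t₂ => t₁.verts ⊕ t₂.verts

/-- Disjoint union of two simple graphs. -/
def sumGraph {α β : Type} (G : SimpleGraph α) (H : SimpleGraph β) : SimpleGraph (α ⊕ β) where
  Adj x y := match x, y with
    | .inl a, .inl b => G.Adj a b
    | .inr a, .inr b => H.Adj a b
    | _, _ => False
  symm := by
    constructor
    rintro (a | a) (b | b) h
    · exact G.adj_symm h
    · exact h.elim
    · exact h.elim
    · exact H.adj_symm h
  loopless := by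
    constructor
    rintro (a | a) h
    · exact G.loopless.irrefl a h
    · exact H.loopless.irrefl a h

/-- Join of two simple graphs: all cross edges are present. -/
def joinGraph {α β : Type} (G : SimpleGraph α) (H : SimpleGraph β) : SimpleGraph (α ⊕ β) where
  Adj x y := match x, y with
    | .inl a, .inl b => G.Adj a b
    | .inr a, .inr b => H.Adj a b
    | .inl _, .inr _ => True
    | .inr _, .inl _ => True
  symm := by
    constructor
    rintro (a | a) (b | b) h
    · exact G.adj_symm h
    · trivial
    · trivial
    · exact H.adj_symm h
  loopless := by
    constructor
    rintro (a | a) h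
    · exact G.loopless.irrefl a h
    · exact H.loopless.irrefl a h

/-- The cograph described by a cotree. -/
def Cotree.graph : (t : Cotree) → SimpleGraph t.verts
  | .leaf => ⊥
  | .union t₁ t₂ => sumGraph t₁.graph t₂.graph
  | .join t₁ t₂ => joinGraph t₁.graph t₂.graph

instance Cotree.instFintypeVerts : (t : Cotree) → Fintype t.verts
  | .leaf => inferInstanceAs (Fintype Unit)
  | .union t₁ t₂ =>
      letI := instFintypeVerts t₁; letI := instFintypeVerts t₂
      inferInstanceAs (Fintype (t₁.verts ⊕ t₂.verts))
  | .join t₁ t₂ =>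
      letI := instFintypeVerts t₁; letI := instFintypeVerts t₂
      inferInstanceAs (Fintype (t₁.verts ⊕ t₂.verts))

/-- The depth of a cotree: a single vertex has depth 0, and a union or join of two cographs
has depth one more than the maximum of their depths. -/
def Cotree.depth : Cotree → ℕ
  | .leaf => 0
  | .union t₁ t₂ => max t₁.depth t₂.depth + 1
  | .join t₁ t₂ => max t₁.depth t₂.depth + 1


/-!
A complete cotree can only use joins, since a union leaves its two sides non-adjacent; and a
join of complete graphs is complete. Hence a complete cotree of depth `d` has at most `2 ^ d`
vertices, while splitting `k` vertices into halves of sizes `⌈k/2⌉` and `⌊k/2⌋` and recursing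
builds `K_k` with depth `⌈log₂ k⌉`.
-/

lemma joinGraph_eq_top_iff {α β : Type} (G : SimpleGraph α) (H : SimpleGraph β) :
    joinGraph G H = ⊤ ↔ G = ⊤ ∧ H = ⊤ := by
  simp only [← SimpleGraph.isClique_univ, SimpleGraph.IsClique, Set.Pairwise, Set.mem_univ,
    true_implies, Sum.forall, joinGraph, ne_eq, Sum.inl.injEq, Sum.inr.injEq, reduceCtorEq,
    not_false_eq_true, imp_self, implies_true, and_true, true_and]

lemma SimpleGraph.Iso.eq_top {α β : Type} {G : SimpleGraph α} (e : G ≃g (⊤ : SimpleGraph β)) :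
    G = ⊤ := by
  ext x y
  rw [← e.map_adj_iff]
  simp

namespace Cotree

lemma verts_nonempty : (t : Cotree) → Nonempty t.verts
  | .leaf => ⟨()⟩
  | .union t₁ _ => (verts_nonempty t₁).elim fun a => ⟨.inl a⟩
  | .join t₁ _ => (verts_nonempty t₁).elim fun a => ⟨.inl a⟩

lemma graph_union_ne_top (t₁ t₂ : Cotree) : (union t₁ t₂).graph ≠ ⊤ := by
  obtain ⟨a⟩ := t₁.verts_nonempty
  obtain ⟨b⟩ := t₂.verts_nonempty
  intro h
  have hab : (union t₁ t₂).graph.Adj (.inl a) (.inr b) := by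
    rw [h]
    exact Sum.inl_ne_inr
  exact hab

lemma card_verts_join (t₁ t₂ : Cotree) :
    Fintype.card (join t₁ t₂).verts = Fintype.card t₁.verts + Fintype.card t₂.verts :=
  Fintype.card_sum

lemma card_verts_le_two_pow_depth {t : Cotree} (h : t.graph = ⊤) :
    Fintype.card t.verts ≤ 2 ^ t.depth := by
  induction t with
  | leaf => rfl
  | union t₁ t₂ => exact absurd h (graph_union_ne_top t₁ t₂)
  | join t₁ t₂ ih₁ ih₂ =>
    obtain ⟨h₁, h₂⟩ := (joinGraph_eq_top_iff t₁.graph t₂.graph).1 h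
    calc Fintype.card (join t₁ t₂).verts
        = Fintype.card t₁.verts + Fintype.card t₂.verts := card_verts_join t₁ t₂
      _ ≤ 2 ^ max t₁.depth t₂.depth + 2 ^ max t₁.depth t₂.depth := by
        gcongr
        · exact (ih₁ h₁).trans (Nat.pow_le_pow_right two_pos (le_max_left _ _))
        · exact (ih₂ h₂).trans (Nat.pow_le_pow_right two_pos (le_max_right _ _))
      _ = 2 ^ (join t₁ t₂).depth := by rw [depth, pow_succ, mul_two]

lemma clog_card_verts_le_depth {t : Cotree} (h : t.graph = ⊤) :
    Nat.clog 2 (Fintype.card t.verts) ≤ t.depth :=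
  (Nat.clog_le_iff_le_pow one_lt_two).2 (card_verts_le_two_pow_depth h)

lemma exists_graph_eq_top_of_pos {k : ℕ} (hk : 1 ≤ k) :
    ∃ t : Cotree, t.graph = ⊤ ∧ Fintype.card t.verts = k ∧ t.depth ≤ Nat.clog 2 k := by
  induction k using Nat.strong_induction_on with
  | _ k ih =>
  obtain rfl | hk₂ := eq_or_lt_of_le hk
  · exact ⟨leaf, by ext ⟨⟩ ⟨⟩; exact iff_of_false id (· rfl), rfl, le_rfl⟩
  obtain ⟨t₁, ht₁, hc₁, hd₁⟩ := ih ((k + 1) / 2) (by omega) (by omega)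
  obtain ⟨t₂, ht₂, hc₂, hd₂⟩ := ih (k / 2) (by omega) (by omega)
  have hclog : Nat.clog 2 k = Nat.clog 2 ((k + 1) / 2) + 1 := Nat.clog_of_two_le one_lt_two hk₂
  refine ⟨join t₁ t₂, (joinGraph_eq_top_iff _ _).2 ⟨ht₁, ht₂⟩, ?_, ?_⟩
  · rw [card_verts_join, hc₁, hc₂]
    omega
  · have hmono := Nat.clog_mono_right 2 (show k / 2 ≤ (k + 1) / 2 by omega)
    simp only [depth, hclog]
    omega

end Cotree

/-- The minimum depth over all cograph constructions of the complete graph on `k ≥ 1` vertices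
equals `⌈log₂ k⌉`. -/
theorem stmt5 (k : ℕ) (hk : 1 ≤ k) :
    IsLeast {d : ℕ | ∃ t : Cotree, t.depth = d ∧
      Nonempty (t.graph ≃g (⊤ : SimpleGraph (Fin k)))} (Nat.clog 2 k) := by
  constructor
  · obtain ⟨t, ht, hcard, hdepth⟩ := Cotree.exists_graph_eq_top_of_pos hk
    have hlower := Cotree.clog_card_verts_le_depth ht
    rw [hcard] at hlower
    refine ⟨t, le_antisymm hdepth hlower, ⟨?_⟩⟩
    rw [ht]
    exact SimpleGraph.Iso.completeGraph (Fintype.equivFinOfCardEq hcard)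
  · rintro d ⟨t, rfl, ⟨e⟩⟩
    have hcard : Fintype.card t.verts = k := by
      rw [Fintype.card_congr e.toEquiv, Fintype.card_fin]
    exact hcard ▸ Cotree.clog_card_verts_le_depth e.eq_top
end

section
/- If a hereditary family F of graphs and the family of complements of graphs in F both have the homogeneous density property, then F has the mighty Erdős–Hajnal property. -/
/-!
Between disjoint sets `A` and `B`, the edges or the non-edges account for at least half of the
`|A||B|` pairs. Homogeneous density of `F` with `ε = 1/2` in the first case, and of the family of
complements in the second, yields linear-size sets that are complete, respectively anticomplete.
-/

/-- A family of finite simple graphs, given as a predicate on graphs over every finite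
vertex type. -/
abbrev GraphFamily : Type 1 := ∀ (V : Type) [Fintype V], SimpleGraph V → Prop

/-- A family of graphs is hereditary if it is closed under taking induced subgraphs. -/
def Hereditary (F : GraphFamily) : Prop :=
  ∀ (V : Type) [Fintype V] (G : SimpleGraph V), F V G →
    ∀ (s : Set V) [Fintype ↥s], F ↥s (G.induce s)

/-- The bipartite graph between `A` and `B` is complete or empty. -/
def HomogPair {V : Type} (G : SimpleGraph V) (A B : Finset V) : Prop :=
  (∀ a ∈ A, ∀ b ∈ B, G.Adj a b) ∨ (∀ a ∈ A, ∀ b ∈ B, ¬ G.Adj a b)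

/-- The number of (ordered) adjacent pairs between `A` and `B`. -/
noncomputable def crossCount {V : Type} (G : SimpleGraph V) (A B : Finset V) : ℕ :=
  {p : V × V | p.1 ∈ A ∧ p.2 ∈ B ∧ G.Adj p.1 p.2}.ncard

/-- The mighty Erdős–Hajnal property: there is `c > 0` such that for every graph in the family
and all disjoint vertex subsets `A, B` of equal size, there are `A' ⊆ A`, `B' ⊆ B` with
`|A'| ≥ c|A|`, `|B'| ≥ c|B|` that are complete or empty to each other. -/
def MightyEH (F : GraphFamily) : Prop :=
  ∃ c : ℝ, 0 < c ∧
    ∀ (V : Type) [Fintype V] (G : SimpleGraph V), F V G →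
      ∀ A B : Finset V, Disjoint A B → A.card = B.card →
        ∃ A' ⊆ A, ∃ B' ⊆ B,
          c * A.card ≤ (A'.card : ℝ) ∧ c * B.card ≤ (B'.card : ℝ) ∧ HomogPair G A' B'

/-- The homogeneous regularity property: for every `ε > 0` there is `K` such that every graph
in the family has an equipartition into `K` parts such that all but at most `ε K²` pairs of
distinct parts are complete or empty to each other. -/
def HomogReg (F : GraphFamily) : Prop :=
  ∀ ε : ℝ, 0 < ε → ∃ K : ℕ, 0 < K ∧
    ∀ (V : Type) [Fintype V] (G : SimpleGraph V), F V G →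
      ∃ P : Fin K → Finset V,
        (∀ i j, i ≠ j → Disjoint (P i) (P j)) ∧
        (∀ v : V, ∃ i, v ∈ P i) ∧
        (∀ i j, (P i).card ≤ (P j).card + 1) ∧
        ({p : Fin K × Fin K | p.1 ≠ p.2 ∧ ¬ HomogPair G (P p.1) (P p.2)}.ncard : ℝ)
          ≤ ε * K ^ 2

/-- The homogeneous density property: for every `ε > 0` there is `C = C(ε)` such that for every
graph in the family and disjoint equal-size subsets `A, B` with at least `ε|A||B|` edges between
them, there are `A' ⊆ A`, `B' ⊆ B` of sizes at least `ε^C |A|`, `ε^C |B|` that are complete to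
each other. -/
def HomogDensity (F : GraphFamily) : Prop :=
  ∀ ε : ℝ, 0 < ε → ε ≤ 1 → ∃ C : ℝ, 0 < C ∧
    ∀ (V : Type) [Fintype V] (G : SimpleGraph V), F V G →
      ∀ A B : Finset V, Disjoint A B → A.card = B.card →
        ε * A.card * B.card ≤ (crossCount G A B : ℝ) →
        ∃ A' ⊆ A, ∃ B' ⊆ B,
          ε ^ C * A.card ≤ (A'.card : ℝ) ∧ ε ^ C * B.card ≤ (B'.card : ℝ) ∧
          ∀ a ∈ A', ∀ b ∈ B', G.Adj a b

/-- The family of complements of graphs in `F`. -/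
def ComplFamily (F : GraphFamily) : GraphFamily :=
  fun V inst G => @F V inst Gᶜ

lemma crossCount_eq_card_filter {V : Type} [DecidableEq V] (G : SimpleGraph V)
    [DecidableRel G.Adj] (A B : Finset V) :
    crossCount G A B = ((A ×ˢ B).filter fun p : V × V => G.Adj p.1 p.2).card := by
  rw [crossCount, ← Set.ncard_coe_finset]
  congr 1
  ext p
  simp [and_assoc]

lemma crossCount_add_crossCount_compl {V : Type} (G : SimpleGraph V) {A B : Finset V}
    (hAB : Disjoint A B) :
    crossCount G A B + crossCount Gᶜ A B = A.card * B.card := by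
  classical
  have hcompl : crossCount Gᶜ A B = ((A ×ˢ B).filter fun p => ¬ G.Adj p.1 p.2).card := by
    rw [crossCount_eq_card_filter]
    refine congrArg Finset.card (Finset.filter_congr fun p hp => ?_)
    obtain ⟨ha, hb⟩ := Finset.mem_product.1 hp
    have hne : p.1 ≠ p.2 := fun h => Finset.disjoint_left.1 hAB ha (h ▸ hb)
    simp [SimpleGraph.compl_adj, hne]
  rw [crossCount_eq_card_filter, hcompl, Finset.card_filter_add_card_filter_not,
    Finset.card_product]

lemma half_le_crossCount_or_compl {V : Type} (G : SimpleGraph V) {A B : Finset V}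
    (hAB : Disjoint A B) :
    1 / 2 * A.card * B.card ≤ (crossCount G A B : ℝ) ∨
      1 / 2 * A.card * B.card ≤ (crossCount Gᶜ A B : ℝ) := by
  have hsum : (crossCount G A B : ℝ) + crossCount Gᶜ A B = A.card * B.card := by
    exact_mod_cast crossCount_add_crossCount_compl G hAB
  by_contra! h
  linarith [h.1, h.2]

lemma HomogPair.of_forall_compl_adj {V : Type} {G : SimpleGraph V} {A B : Finset V}
    (h : ∀ a ∈ A, ∀ b ∈ B, Gᶜ.Adj a b) : HomogPair G A B :=
  Or.inr fun a ha b hb => ((SimpleGraph.compl_adj G a b).1 (h a ha b hb)).2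

lemma complFamily_compl_iff {F : GraphFamily} {V : Type} [Fintype V] {G : SimpleGraph V} :
    ComplFamily F V Gᶜ ↔ F V G := by
  rw [ComplFamily, compl_compl]

lemma HomogDensity.exists_pos_const {F : GraphFamily} (hF : HomogDensity F) {ε : ℝ}
    (hε : 0 < ε) (hε₁ : ε ≤ 1) :
    ∃ c : ℝ, 0 < c ∧ ∀ c' ≤ c,
      ∀ (V : Type) [Fintype V] (G : SimpleGraph V), F V G →
        ∀ A B : Finset V, Disjoint A B → A.card = B.card →
          ε * A.card * B.card ≤ (crossCount G A B : ℝ) →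
          ∃ A' ⊆ A, ∃ B' ⊆ B, c' * A.card ≤ (A'.card : ℝ) ∧ c' * B.card ≤ (B'.card : ℝ) ∧
            ∀ a ∈ A', ∀ b ∈ B', G.Adj a b := by
  obtain ⟨C, -, H⟩ := hF ε hε hε₁
  refine ⟨ε ^ C, Real.rpow_pos_of_pos hε C, fun c' hc' V _ G hG A B hAB hcard hdense => ?_⟩
  obtain ⟨A', hA', B', hB', hA'card, hB'card, hcomplete⟩ := H V G hG A B hAB hcard hdense
  exact ⟨A', hA', B', hB', (mul_le_mul_of_nonneg_right hc' A.card.cast_nonneg).trans hA'card,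
    (mul_le_mul_of_nonneg_right hc' B.card.cast_nonneg).trans hB'card, hcomplete⟩

theorem stmt8_general (F : GraphFamily)
    (h₁ : HomogDensity F) (h₂ : HomogDensity (ComplFamily F)) : MightyEH F := by
  obtain ⟨c₁, hc₁, H₁⟩ := h₁.exists_pos_const (ε := 1 / 2) (by norm_num) (by norm_num)
  obtain ⟨c₂, hc₂, H₂⟩ := h₂.exists_pos_const (ε := 1 / 2) (by norm_num) (by norm_num)
  refine ⟨min c₁ c₂, lt_min hc₁ hc₂, fun V _ G hG A B hAB hcard => ?_⟩
  rcases half_le_crossCount_or_compl G hAB with hdense | hsparse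
  · obtain ⟨A', hA', B', hB', hA'card, hB'card, hcomplete⟩ :=
      H₁ _ (min_le_left _ _) V G hG A B hAB hcard hdense
    exact ⟨A', hA', B', hB', hA'card, hB'card, Or.inl hcomplete⟩
  · obtain ⟨A', hA', B', hB', hA'card, hB'card, hcomplete⟩ :=
      H₂ _ (min_le_right _ _) V Gᶜ (complFamily_compl_iff.2 hG) A B hAB hcard hsparse
    exact ⟨A', hA', B', hB', hA'card, hB'card, .of_forall_compl_adj hcomplete⟩

/-- If a hereditary family `F` of graphs and the family of complements of graphs in `F` both
have the homogeneous density property, then `F` has the mighty Erdős–Hajnal property. -/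
theorem stmt8 (F : GraphFamily) (hF : Hereditary F)
    (h₁ : HomogDensity F) (h₂ : HomogDensity (ComplFamily F)) : MightyEH F :=
  stmt8_general F h₁ h₂
end

section
/- If a hereditary family F of graphs has the strong Erdős–Hajnal property, then F has the polynomial Rödl property. -/
/-- The strong Erdős–Hajnal property: there is `ε > 0` such that every graph in the family on
at least 2 vertices has two disjoint vertex subsets, each of size at least `ε n`, that are
complete or empty to each other. -/
def StrongEH (F : GraphFamily) : Prop :=
  ∃ c : ℝ, 0 < c ∧
    ∀ (V : Type) [Fintype V] (G : SimpleGraph V), F V G → 2 ≤ Fintype.card V →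
      ∃ A B : Finset V, Disjoint A B ∧
        c * Fintype.card V ≤ (A.card : ℝ) ∧ c * Fintype.card V ≤ (B.card : ℝ) ∧
        HomogPair G A B

/-- The induced subgraph on `s` is `ε`-homogeneous: its edge density is at most `ε` or at
least `1 - ε` (densities measured via ordered adjacent pairs over `|s|(|s|-1)`). -/
def EpsHomogOn {V : Type} (G : SimpleGraph V) (s : Finset V) (ε : ℝ) : Prop :=
  ({p : V × V | p.1 ∈ s ∧ p.2 ∈ s ∧ G.Adj p.1 p.2}.ncard : ℝ) ≤ ε * s.card * (s.card - 1) ∨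
  (1 - ε) * s.card * (s.card - 1) ≤ ({p : V × V | p.1 ∈ s ∧ p.2 ∈ s ∧ G.Adj p.1 p.2}.ncard : ℝ)

/-- The polynomial Rödl property: there is a constant `C` such that for every `ε ∈ (0,1)`,
every graph in the family has an induced subgraph on at least `ε^C n` vertices that is
`ε`-homogeneous. -/
def PolyRodl (F : GraphFamily) : Prop :=
  ∃ C : ℝ, 0 < C ∧
    ∀ ε : ℝ, 0 < ε → ε < 1 →
      ∀ (V : Type) [Fintype V] (G : SimpleGraph V), F V G →
        ∃ s : Finset V, ε ^ C * Fintype.card V ≤ (s.card : ℝ) ∧ EpsHomogOn G s ε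

/-!
Split a vertex set of size `n` into a homogeneous pair of parts of size at least `c n`, and split
the parts again. After `h` rounds the leaves have size at least `c ^ h n`, and they carry a family
of pairwise complete leaves and a family of pairwise anticomplete leaves whose lengths multiply
to at least `2 ^ h`: at a complete split the complete families of the two halves concatenate and
the longer anticomplete family is kept, and symmetrically at an empty split. With `2 ^ t ≥ 1 / ε`
and `h = 2 t`, one family has at least `1 / ε` members; trimmed to equal size, the only pairs of
the minority type in their union lie inside a single member, an `ε` fraction of all pairs. Choosing
`2 ^ t ≤ 2 / ε`, the union has at least `c ^ (2 t) n ≥ ε ^ (4 k) n` vertices when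
`(1 / 2) ^ k ≤ c` and `ε ≤ 1 / 2`; for `ε ≥ 1 / 2` every set is `ε`-homogeneous.
-/

open Finset

section Counting

variable {V : Type} (G : SimpleGraph V)

theorem crossCount_self_eq_card_filter [DecidableEq V] [DecidableRel G.Adj] (s : Finset V) :
    crossCount G s s = #{p ∈ s.offDiag | G.Adj p.1 p.2} := by
  rw [crossCount, ← Set.ncard_coe_finset]
  congr 1
  ext ⟨a, b⟩
  simp only [coe_filter, mem_offDiag]
  exact ⟨fun ⟨ha, hb, hab⟩ => ⟨⟨ha, hb, hab.ne⟩, hab⟩, fun ⟨⟨ha, hb, _⟩, hab⟩ => ⟨ha, hb, hab⟩⟩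

theorem crossCount_add_crossCount_compl_s10 (s : Finset V) :
    (crossCount G s s + crossCount Gᶜ s s : ℝ) = #s * (#s - 1) := by
  classical
  have hcompl : {p ∈ s.offDiag | Gᶜ.Adj p.1 p.2} = {p ∈ s.offDiag | ¬ G.Adj p.1 p.2} :=
    filter_congr fun p hp => by rw [SimpleGraph.compl_adj, and_iff_right (mem_offDiag.1 hp).2.2]
  have hsum := card_filter_add_card_filter_not (s := s.offDiag) fun p => G.Adj p.1 p.2
  rw [crossCount_self_eq_card_filter, crossCount_self_eq_card_filter, hcompl]
  rw [offDiag_card] at hsum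
  rw [← Nat.cast_add, hsum, Nat.cast_sub (Nat.le_mul_self _)]
  push_cast
  ring

variable {G}

theorem crossCount_self_le (s : Finset V) : (crossCount G s s : ℝ) ≤ #s * (#s - 1) := by
  rw [← crossCount_add_crossCount_compl_s10 G s]
  exact le_add_of_nonneg_right (Nat.cast_nonneg _)

theorem epsHomogOn_compl_iff {s : Finset V} {ε : ℝ} : EpsHomogOn Gᶜ s ε ↔ EpsHomogOn G s ε := by
  have h := crossCount_add_crossCount_compl_s10 G s
  change (crossCount Gᶜ s s : ℝ) ≤ _ ∨ _ ≤ (crossCount Gᶜ s s : ℝ) ↔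
    (crossCount G s s : ℝ) ≤ _ ∨ _ ≤ (crossCount G s s : ℝ)
  constructor <;> rintro (h' | h')
  exacts [Or.inr (by linarith), Or.inl (by linarith), Or.inr (by linarith), Or.inl (by linarith)]

theorem epsHomogOn_of_card_le_one {s : Finset V} (hs : #s ≤ 1) (ε : ℝ) : EpsHomogOn G s ε := by
  left
  have : (#s : ℝ) * (#s - 1) = 0 := by
    interval_cases h : #s <;> simp
  change (crossCount G s s : ℝ) ≤ _
  rw [mul_assoc, this, mul_zero]
  simpa [this] using crossCount_self_le (G := G) s

theorem epsHomogOn_of_half_le (s : Finset V) {ε : ℝ} (hε : 1 / 2 ≤ ε) : EpsHomogOn G s ε := by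
  have h := crossCount_add_crossCount_compl_s10 G s
  have h0 : (0 : ℝ) ≤ crossCount G s s := Nat.cast_nonneg _
  have h1 : (0 : ℝ) ≤ crossCount Gᶜ s s := Nat.cast_nonneg _
  change (crossCount G s s : ℝ) ≤ _ ∨ _ ≤ (crossCount G s s : ℝ)
  rcases le_total (crossCount G s s : ℝ) (crossCount Gᶜ s s) with hle | hle
  · left; nlinarith
  · right; nlinarith

end Counting

section HomogeneousPairs

variable {V W : Type} {G : SimpleGraph V}

theorem HomogPair.map {H : SimpleGraph W} (f : H ↪g G) {A B : Finset W} (h : HomogPair H A B) :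
    HomogPair G (A.map f.toEmbedding) (B.map f.toEmbedding) := by
  simp only [HomogPair, forall_mem_map, RelEmbedding.coe_toEmbedding, f.map_adj_iff]
  exact h

theorem HomogPair.isCompleteBetween_or {A B : Finset V} (h : HomogPair G A B)
    (hAB : Disjoint A B) : G.IsCompleteBetween A B ∨ Gᶜ.IsCompleteBetween A B := by
  refine h.imp (fun h a ha b hb => h a ha b hb) fun h a ha b hb => ?_
  exact (G.compl_adj a b).2 ⟨fun hab => disjoint_left.1 hAB ha (hab ▸ hb), h a ha b hb⟩

def HasHomogPairs (G : SimpleGraph V) (c : ℝ) : Prop :=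
  ∀ S : Finset V, 2 ≤ S.card → ∃ A ⊆ S, ∃ B ⊆ S,
    Disjoint A B ∧ c * S.card ≤ A.card ∧ c * S.card ≤ B.card ∧ HomogPair G A B

theorem HasHomogPairs.mono {c c' : ℝ} (h : HasHomogPairs G c) (hc : c' ≤ c) :
    HasHomogPairs G c' := by
  intro S hS
  obtain ⟨A, hA, B, hB, hAB, hcA, hcB, hpair⟩ := h S hS
  have hc' : c' * S.card ≤ c * S.card := by gcongr
  exact ⟨A, hA, B, hB, hAB, hc'.trans hcA, hc'.trans hcB, hpair⟩

theorem hasHomogPairs_of_strongEH {F : GraphFamily} (hF : Hereditary F) {c : ℝ}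
    (hc : ∀ (V : Type) [Fintype V] (G : SimpleGraph V), F V G → 2 ≤ Fintype.card V →
      ∃ A B : Finset V, Disjoint A B ∧
        c * Fintype.card V ≤ (A.card : ℝ) ∧ c * Fintype.card V ≤ (B.card : ℝ) ∧
        HomogPair G A B)
    [Fintype V] (hG : F V G) : HasHomogPairs G c := by
  intro S hS
  have hcard : Fintype.card (S : Set V) = S.card := by simp
  obtain ⟨A, B, hAB, hA, hB, hpair⟩ :=
    hc _ (G.induce (S : Set V)) (hF V G hG S) (hcard ▸ hS)
  let f := SimpleGraph.Embedding.induce (G := G) (S : Set V)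
  have hsub (X : Finset (S : Set V)) : X.map f.toEmbedding ⊆ S := fun x hx => by
    obtain ⟨a, -, rfl⟩ := mem_map.1 hx
    exact a.2
  refine ⟨A.map f.toEmbedding, hsub A, B.map f.toEmbedding, hsub B, ?_, ?_, ?_, hpair.map f⟩
  · exact disjoint_map _ |>.2 hAB
  · simpa [hcard] using hA
  · simpa [hcard] using hB

end HomogeneousPairs

section CompleteFamilies

variable {V : Type} {G : SimpleGraph V}

/-- In `Gᶜ`, this is a family of disjoint sets that are pairwise anticomplete in `G`. -/
def IsCompleteFamily (G : SimpleGraph V) (S : Finset V) (m : ℝ) (L : List (Finset V)) : Prop :=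
  (∀ X ∈ L, X ⊆ S ∧ m ≤ #X) ∧ L.Pairwise fun X Y : Finset V => G.IsCompleteBetween X Y

theorem isCompleteFamily_singleton (S : Finset V) : IsCompleteFamily G S #S [S] :=
  ⟨by simp, List.pairwise_singleton _ _⟩

theorem IsCompleteFamily.mono {S T : Finset V} {m m' : ℝ} {L : List (Finset V)}
    (h : IsCompleteFamily G S m L) (hST : S ⊆ T) (hm : m' ≤ m) : IsCompleteFamily G T m' L :=
  ⟨fun X hX => ⟨(h.1 X hX).1.trans hST, hm.trans (h.1 X hX).2⟩, h.2⟩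

theorem IsCompleteFamily.append [DecidableEq V] {A B : Finset V} {m : ℝ} {L K : List (Finset V)}
    (hL : IsCompleteFamily G A m L) (hK : IsCompleteFamily G B m K)
    (hAB : G.IsCompleteBetween A B) : IsCompleteFamily G (A ∪ B) m (L ++ K) := by
  refine ⟨fun X hX => ?_, List.pairwise_append.2 ⟨hL.2, hK.2, fun X hX Y hY => ?_⟩⟩
  · rcases List.mem_append.1 hX with hX | hX
    · exact ⟨(hL.1 X hX).1.trans subset_union_left, (hL.1 X hX).2⟩
    · exact ⟨(hK.1 X hX).1.trans subset_union_right, (hK.1 X hX).2⟩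
  · exact fun a ha b hb => hAB ((hL.1 X hX).1 ha) ((hK.1 Y hY).1 hb)

theorem exists_completeFamilies_of_isCompleteBetween {A B S : Finset V} {m : ℝ}
    (hA : A ⊆ S) (hB : B ⊆ S) (hAB : G.IsCompleteBetween A B) {L₁ L₂ K₁ K₂ : List (Finset V)}
    (hL₁ : IsCompleteFamily G A m L₁) (hL₂ : IsCompleteFamily Gᶜ A m L₂)
    (hK₁ : IsCompleteFamily G B m K₁) (hK₂ : IsCompleteFamily Gᶜ B m K₂) :
    ∃ M₁ M₂ : List (Finset V), L₁.length * L₂.length + K₁.length * K₂.length ≤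
      M₁.length * M₂.length ∧ IsCompleteFamily G S m M₁ ∧ IsCompleteFamily Gᶜ S m M₂ := by
  classical
  have hM₁ := (hL₁.append hK₁ hAB).mono (union_subset hA hB) le_rfl
  rcases le_total L₂.length K₂.length with h | h
  · refine ⟨_, _, ?_, hM₁, hK₂.mono hB le_rfl⟩
    rw [List.length_append, add_mul]
    gcongr
  · refine ⟨_, _, ?_, hM₁, hL₂.mono hA le_rfl⟩
    rw [List.length_append, add_mul]
    gcongr

theorem HasHomogPairs.exists_completeFamilies {c : ℝ} (hG : HasHomogPairs G c) (hc0 : 0 ≤ c)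
    (hc : c ≤ 1 / 2) (h : ℕ) (S : Finset V) (hS : 1 ≤ c ^ h * #S) :
    ∃ L₁ L₂ : List (Finset V), 2 ^ h ≤ L₁.length * L₂.length ∧
      IsCompleteFamily G S (c ^ h * #S) L₁ ∧ IsCompleteFamily Gᶜ S (c ^ h * #S) L₂ := by
  induction h generalizing S with
  | zero => exact ⟨[S], [S], by simp, by simpa using isCompleteFamily_singleton S,
      by simpa using isCompleteFamily_singleton S⟩
  | succ h ih =>
    have hS2 : 2 ≤ #S := by
      have : c ^ (h + 1) ≤ 1 / 2 :=
        (pow_le_of_le_one hc0 (hc.trans (by norm_num)) h.succ_ne_zero).trans hc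
      have : (2 : ℝ) ≤ #S := by nlinarith
      exact_mod_cast this
    have hchild : ∀ X ⊆ S, c * #S ≤ #X → ∃ L₁ L₂ : List (Finset V),
        2 ^ h ≤ L₁.length * L₂.length ∧ IsCompleteFamily G X (c ^ (h + 1) * #S) L₁ ∧
          IsCompleteFamily Gᶜ X (c ^ (h + 1) * #S) L₂ := by
      intro X _ hX
      have hm : c ^ (h + 1) * #S ≤ c ^ h * #X := by
        rw [pow_succ, mul_assoc]
        exact mul_le_mul_of_nonneg_left hX (pow_nonneg hc0 h)
      obtain ⟨L₁, L₂, hlen, h₁, h₂⟩ := ih X (hS.trans hm)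
      exact ⟨L₁, L₂, hlen, h₁.mono subset_rfl hm, h₂.mono subset_rfl hm⟩
    obtain ⟨A, hA, B, hB, hAB, hcA, hcB, hpair⟩ := hG S hS2
    obtain ⟨L₁, L₂, hL, hL₁, hL₂⟩ := hchild A hA hcA
    obtain ⟨K₁, K₂, hK, hK₁, hK₂⟩ := hchild B hB hcB
    rcases hpair.isCompleteBetween_or hAB with hAB' | hAB'
    · obtain ⟨M₁, M₂, hM, hM₁, hM₂⟩ :=
        exists_completeFamilies_of_isCompleteBetween hA hB hAB' hL₁ hL₂ hK₁ hK₂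
      exact ⟨M₁, M₂, by rw [pow_succ]; omega, hM₁, hM₂⟩
    · rw [← compl_compl G] at hL₁ hK₁
      obtain ⟨M₂, M₁, hM, hM₂, hM₁⟩ :=
        exists_completeFamilies_of_isCompleteBetween hA hB hAB' hL₂ hL₁ hK₂ hK₁
      rw [compl_compl] at hM₁
      refine ⟨M₁, M₂, ?_, hM₁, hM₂⟩
      linarith [pow_succ 2 h, mul_comm L₁.length L₂.length, mul_comm K₁.length K₂.length,
        mul_comm M₁.length M₂.length]

end CompleteFamilies

section Blocks

variable {V : Type} {H : SimpleGraph V}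

theorem crossCount_compl_biUnion_le [DecidableEq V] {ι : Type} [Fintype ι] (P : ι → Finset V)
    (hP : Pairwise fun i j => H.IsCompleteBetween (P i) (P j)) :
    crossCount Hᶜ (univ.biUnion P) (univ.biUnion P) ≤ ∑ i, crossCount Hᶜ (P i) (P i) := by
  classical
  simp only [crossCount_self_eq_card_filter]
  refine (card_le_card fun p hp => ?_).trans card_biUnion_le
  obtain ⟨hp, hadj⟩ := mem_filter.1 hp
  obtain ⟨ha, hb, -⟩ := mem_offDiag.1 hp
  obtain ⟨i, -, hi⟩ := mem_biUnion.1 ha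
  obtain ⟨j, -, hj⟩ := mem_biUnion.1 hb
  obtain rfl : i = j := by
    by_contra hij
    exact ((H.compl_adj _ _).1 hadj).2 (hP hij hi hj)
  exact mem_biUnion.2 ⟨i, mem_univ _, mem_filter.2 ⟨mem_offDiag.2 ⟨hi, hj, hadj.ne⟩, hadj⟩⟩

theorem List.Pairwise.isCompleteBetween_getElem {L : List (Finset V)}
    (hL : L.Pairwise fun X Y : Finset V => H.IsCompleteBetween X Y) {i j : ℕ} (hi : i < L.length)
    (hj : j < L.length) (hij : i ≠ j) : H.IsCompleteBetween L[i] L[j] := by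
  rcases hij.lt_or_gt with h | h
  · exact List.pairwise_iff_getElem.1 hL i j hi hj h
  · exact (List.pairwise_iff_getElem.1 hL j i hj hi h).symm

theorem exists_epsHomogOn_of_pairwise_isCompleteBetween {L : List (Finset V)}
    (hL : L.Pairwise fun X Y : Finset V => H.IsCompleteBetween X Y) {M : ℕ} (hM : M ≤ L.length)
    {m ε : ℝ} (hm : ∀ X ∈ L, m ≤ #X) (hεM : 1 ≤ ε * M) (hε : ε ≤ 1) :
    ∃ U : Finset V, M * m ≤ #U ∧ EpsHomogOn H U ε := by
  classical
  set s := ⌈m⌉₊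
  have hsub (i : Fin M) : ∃ Q ⊆ L[i.1], #Q = s :=
    exists_subset_card_eq (Nat.ceil_le.2 (hm _ (List.getElem_mem _)))
  choose Q hQL hQs using hsub
  have hQ : Pairwise fun i j => H.IsCompleteBetween (Q i) (Q j) := fun i j hij a ha b hb =>
    hL.isCompleteBetween_getElem _ _ (Fin.val_ne_of_ne hij) (hQL i ha) (hQL j hb)
  set U := univ.biUnion Q
  have hU : #U = M * s := by
    rw [card_biUnion fun i _ j _ hij => Finset.disjoint_coe.1 (hQ hij).disjoint]
    simp [hQs]
  refine ⟨U, ?_, epsHomogOn_compl_iff.1 (Or.inl ?_)⟩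
  · rw [hU, Nat.cast_mul]
    exact mul_le_mul_of_nonneg_left (Nat.le_ceil m) (Nat.cast_nonneg M)
  have hcount : (crossCount Hᶜ U U : ℝ) ≤ M * (s * (s - 1)) := by
    calc (crossCount Hᶜ U U : ℝ) ≤ ∑ i, (crossCount Hᶜ (Q i) (Q i) : ℝ) := by
          exact_mod_cast crossCount_compl_biUnion_le Q hQ
      _ ≤ ∑ _i : Fin M, (s * (s - 1) : ℝ) := by
          gcongr with i
          simpa [hQs] using crossCount_self_le (G := Hᶜ) (Q i)
      _ = M * (s * (s - 1)) := by simp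
  change (crossCount Hᶜ U U : ℝ) ≤ _
  rw [hU, Nat.cast_mul]
  have hs : (0 : ℝ) ≤ s := Nat.cast_nonneg s
  have hM0 : (0 : ℝ) ≤ M := Nat.cast_nonneg M
  nlinarith [mul_nonneg (mul_nonneg hM0 hs) (mul_nonneg hs (sub_nonneg.2 hεM)),
    mul_nonneg (mul_nonneg hM0 hs) (sub_nonneg.2 hε)]

end Blocks

theorem le_or_le_of_mul_self_le_mul {n a b : ℕ} (h : n * n ≤ a * b) : n ≤ a ∨ n ≤ b := by
  by_contra! h'
  exact (Nat.mul_lt_mul'' h'.1 h'.2).not_ge h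

theorem exists_two_pow_scale {c ε : ℝ} {k : ℕ} (hk : (1 / 2) ^ k ≤ c) (hε0 : 0 < ε)
    (hε : ε ≤ 1 / 2) : ∃ t : ℕ, 1 ≤ ε * 2 ^ t ∧ ε ^ (4 * k) ≤ c ^ (2 * t) := by
  obtain ⟨n, hn, hn'⟩ := exists_nat_pow_near (one_le_inv₀ hε0 |>.2 (by linarith)) one_lt_two
  refine ⟨n + 1, ?_, ?_⟩
  · have := mul_lt_mul_of_pos_left hn' hε0
    rw [mul_inv_cancel₀ hε0.ne'] at this
    exact this.le
  have hεn : ε ≤ (2 ^ n)⁻¹ := by simpa using inv_anti₀ (by positivity) hn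
  have hsq : ε ^ 2 ≤ (1 / 2) ^ (n + 1) :=
    calc ε ^ 2 ≤ ε * (1 / 2) := by nlinarith
      _ ≤ (2 ^ n)⁻¹ * (1 / 2) := by gcongr
      _ = (1 / 2) ^ (n + 1) := by rw [pow_succ, one_div_pow, one_div (2 ^ n)]
  calc ε ^ (4 * k) = (ε ^ 2) ^ (2 * k) := by ring
    _ ≤ ((1 / 2) ^ (n + 1)) ^ (2 * k) := pow_le_pow_left₀ (by positivity) hsq _
    _ = ((1 / 2) ^ k) ^ (2 * (n + 1)) := by ring
    _ ≤ c ^ (2 * (n + 1)) := pow_le_pow_left₀ (by positivity) hk _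

theorem HasHomogPairs.exists_epsHomogOn {V : Type} [Fintype V] {G : SimpleGraph V} {c : ℝ}
    (hG : HasHomogPairs G c) (hc : c ≤ 1 / 2) {k : ℕ} (hk : (1 / 2) ^ k ≤ c) {ε : ℝ}
    (hε0 : 0 < ε) (hε1 : ε < 1) :
    ∃ s : Finset V, ε ^ (4 * k) * Fintype.card V ≤ #s ∧ EpsHomogOn G s ε := by
  classical
  have hεk : ε ^ (4 * k) ≤ 1 := pow_le_one₀ hε0.le hε1.le
  rcases le_or_gt (1 / 2) ε with hε | hε
  · exact ⟨univ, by simpa using mul_le_of_le_one_left (Nat.cast_nonneg _) hεk,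
      epsHomogOn_of_half_le _ hε⟩
  obtain ⟨t, hεt, hpow⟩ := exists_two_pow_scale hk hε0 hε.le
  have hc0 : 0 ≤ c := (by positivity : (0 : ℝ) ≤ (1 / 2) ^ k).trans hk
  have hn : ε ^ (4 * k) * Fintype.card V ≤ c ^ (2 * t) * Fintype.card V := by gcongr
  rcases lt_or_ge (c ^ (2 * t) * Fintype.card V) 1 with hsmall | hlarge
  · obtain ⟨s, -, hs⟩ := exists_subset_card_eq (s := univ) (n := min 1 (Fintype.card V))
      ((min_le_right _ _).trans_eq card_univ.symm)
    refine ⟨s, ?_, epsHomogOn_of_card_le_one (hs ▸ min_le_left _ _) ε⟩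
    rw [hs, Nat.cast_min, Nat.cast_one, le_min_iff]
    exact ⟨by linarith, mul_le_of_le_one_left (Nat.cast_nonneg _) hεk⟩
  obtain ⟨L₁, L₂, hlen, h₁, h₂⟩ :=
    hG.exists_completeFamilies hc0 hc (2 * t) univ (by simpa using hlarge)
  have hsize (U : Finset V) (hU : (2 ^ t : ℕ) * (c ^ (2 * t) * #(univ : Finset V)) ≤ #U) :
      ε ^ (4 * k) * Fintype.card V ≤ #U := by
    have h2t : (1 : ℝ) ≤ (2 ^ t : ℕ) := by exact_mod_cast Nat.one_le_two_pow
    calc ε ^ (4 * k) * Fintype.card V ≤ c ^ (2 * t) * Fintype.card V := hn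
      _ ≤ (2 ^ t : ℕ) * (c ^ (2 * t) * Fintype.card V) := le_mul_of_one_le_left (by positivity) h2t
      _ ≤ #U := by rwa [card_univ] at hU
  have hεt' : 1 ≤ ε * (2 ^ t : ℕ) := by exact_mod_cast hεt
  have hlen' : 2 ^ t * 2 ^ t ≤ L₁.length * L₂.length := by rwa [← pow_add, ← two_mul]
  rcases le_or_le_of_mul_self_le_mul hlen' with h | h
  · obtain ⟨U, hU, hUε⟩ := exists_epsHomogOn_of_pairwise_isCompleteBetween h₁.2 h
      (fun X hX => (h₁.1 X hX).2) hεt' hε1.le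
    exact ⟨U, hsize U hU, hUε⟩
  · obtain ⟨U, hU, hUε⟩ := exists_epsHomogOn_of_pairwise_isCompleteBetween h₂.2 h
      (fun X hX => (h₂.1 X hX).2) hεt' hε1.le
    exact ⟨U, hsize U hU, epsHomogOn_compl_iff.1 hUε⟩

/-- If a hereditary family of graphs has the strong Erdős–Hajnal property, then it has the
polynomial Rödl property. -/
theorem stmt10 (F : GraphFamily) (hF : Hereditary F) (h : StrongEH F) : PolyRodl F := by
  obtain ⟨c₀, hc₀, hEH⟩ := h
  obtain ⟨k, hk⟩ := exists_pow_lt_of_lt_one hc₀ (by norm_num : (1 / 2 : ℝ) < 1)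
  refine ⟨4 * (k + 1), by positivity, fun ε hε0 hε1 V _ G hG => ?_⟩
  have hc : ((1 : ℝ) / 2) ^ (k + 1) ≤ c₀ :=
    (pow_le_pow_of_le_one (by norm_num) (by norm_num) k.le_succ).trans hk.le
  obtain ⟨s, hs, hsε⟩ := ((hasHomogPairs_of_strongEH hF hEH hG).mono hc).exists_epsHomogOn
    (pow_le_of_le_one (by norm_num) (by norm_num) k.succ_ne_zero) le_rfl hε0 hε1
  refine ⟨s, ?_, hsε⟩
  have hpow := Real.rpow_natCast ε (4 * (k + 1))
  push_cast at hpow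
  rwa [hpow]
end

section
/- If a hereditary family F of graphs has the mighty Erdős–Hajnal property and is closed under cloning vertices, then F has the unbalanced mighty Erdős–Hajnal property. -/
/-- The graph obtained from `G` by cloning the vertex `v`: the new vertex (`Sum.inr ()`) is
adjacent to exactly the neighbors of `v` (and not to `v` itself). -/
def cloneGraph {V : Type} (G : SimpleGraph V) (v : V) : SimpleGraph (V ⊕ Unit) where
  Adj x y := match x, y with
    | .inl a, .inl b => G.Adj a b
    | .inl a, .inr _ => G.Adj a v
    | .inr _, .inl b => G.Adj v b
    | .inr _, .inr _ => False
  symm := by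
    refine ⟨?_⟩
    rintro (a | a) (b | b) h
    · exact G.adj_symm h
    · exact G.adj_symm h
    · exact G.adj_symm h
    · exact h.elim
  loopless := by
    refine ⟨?_⟩
    rintro (a | a) h
    · exact G.irrefl h
    · exact h

/-- `F` is closed under cloning vertices. -/
def ClosedUnderCloning (F : GraphFamily) : Prop :=
  ∀ (V : Type) [Fintype V] (G : SimpleGraph V), F V G →
    ∀ v : V, F (V ⊕ Unit) (cloneGraph G v)

/-- The unbalanced mighty Erdős–Hajnal property: as the mighty Erdős–Hajnal property, but for
all disjoint subsets `A, B` without the restriction `|A| = |B|`. -/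
def UnbalancedMightyEH (F : GraphFamily) : Prop :=
  ∃ c : ℝ, 0 < c ∧
    ∀ (V : Type) [Fintype V] (G : SimpleGraph V), F V G →
      ∀ A B : Finset V, Disjoint A B →
        ∃ A' ⊆ A, ∃ B' ⊆ B,
          c * A.card ≤ (A'.card : ℝ) ∧ c * B.card ≤ (B'.card : ℝ) ∧ HomogPair G A' B'


/-!
Given disjoint `A`, `B` with `a = |A| ≤ |B| = b`, clone every vertex of `A` exactly `⌊b/a⌋` times.
The `a (⌊b/a⌋ + 1) ≥ b` copies of `A` contain a set of `b` copies, to which the balanced property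
applies against `B`. A homogeneous pair among copies projects to a homogeneous pair in `G`; since
each vertex of `A` has at most `⌊b/a⌋ + 1 ≤ 2b/a` copies, the projection keeps a `c/2` fraction of `A`.
-/

open Finset

def MightyEHWith (F : GraphFamily) (c : ℝ) : Prop :=
  ∀ (V : Type) [Fintype V] (G : SimpleGraph V), F V G →
    ∀ A B : Finset V, Disjoint A B → #A = #B →
      ∃ A' ⊆ A, ∃ B' ⊆ B, c * #A ≤ (#A' : ℝ) ∧ c * #B ≤ (#B' : ℝ) ∧ HomogPair G A' B'

def UnbalancedMightyEHWith (F : GraphFamily) (c : ℝ) : Prop :=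
  ∀ (V : Type) [Fintype V] (G : SimpleGraph V), F V G →
    ∀ A B : Finset V, Disjoint A B →
      ∃ A' ⊆ A, ∃ B' ⊆ B, c * #A ≤ (#A' : ℝ) ∧ c * #B ≤ (#B' : ℝ) ∧ HomogPair G A' B'

lemma MightyEHWith.mono {F : GraphFamily} {c c' : ℝ} (h : MightyEHWith F c) (hc' : c' ≤ c) :
    MightyEHWith F c' := by
  intro V _ G hG A B hAB hcard
  obtain ⟨A', hA', B', hB', hA'card, hB'card, hhom⟩ := h V G hG A B hAB hcard
  exact ⟨A', hA', B', hB', by nlinarith [(#A).cast_nonneg (α := ℝ)],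
    by nlinarith [(#B).cast_nonneg (α := ℝ)], hhom⟩

section HomogPair

variable {V W : Type} {G : SimpleGraph V} {A B : Finset V}

lemma HomogPair.symm (h : HomogPair G A B) : HomogPair G B A := by
  rcases h with h | h
  · exact Or.inl fun b hb a ha => (h a ha b hb).symm
  · exact Or.inr fun b hb a ha hadj => h a ha b hb hadj.symm

lemma HomogPair.image_of_comap [DecidableEq V] {f : W → V} {A B : Finset W}
    (h : HomogPair (G.comap f) A B) : HomogPair G (A.image f) (B.image f) := by
  simp only [HomogPair, forall_mem_image]
  exact h

end HomogPair

/-- Vertices after cloning, one after the other, the vertices in `l`. Since `F` need not be closed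
under isomorphism, a blow-up of `G` must be built on exactly this type by iterating `cloneGraph`. -/
def IterClone (V : Type) : List V → Type
  | [] => V
  | _ :: l => IterClone V l ⊕ Unit

namespace IterClone

variable {V : Type}

instance instFintype [Fintype V] : ∀ l : List V, Fintype (IterClone V l)
  | [] => inferInstanceAs (Fintype V)
  | _ :: l => letI := instFintype l; inferInstanceAs (Fintype (IterClone V l ⊕ Unit))

def proj : ∀ l : List V, IterClone V l → V
  | [] => id
  | x :: l => Sum.elim (proj l) fun _ => x

def orig : ∀ l : List V, V → IterClone V l
  | [] => id
  | _ :: l => fun v => Sum.inl (orig l v)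

@[simp]
lemma proj_orig : ∀ (l : List V) (v : V), proj l (orig l v) = v
  | [], _ => rfl
  | _ :: l, v => proj_orig l v

lemma card_filter_proj_eq [Fintype V] [DecidableEq V] (u : V) :
    ∀ l : List V, #{t | proj l t = u} = l.count u + 1
  | [] => by
    show #(univ.filter fun t : V => t = u) = 0 + 1
    simp [filter_eq']
  | x :: l => by
    have ih := card_filter_proj_eq u l
    rw [card_filter] at ih ⊢
    rw [List.count_cons]
    show (∑ t : IterClone V l ⊕ Unit, if proj (x :: l) t = u then 1 else 0) = _
    rw [Fintype.sum_sum_type]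
    change (∑ t : IterClone V l, if proj l t = u then 1 else 0) + (∑ _ : Unit, if x = u then 1 else 0)
      = _
    rw [ih]
    split_ifs <;> simp_all

lemma card_filter_proj_mem [Fintype V] [DecidableEq V] (l : List V) (S : Finset V) :
    #{t | proj l t ∈ S} = ∑ u ∈ S, (l.count u + 1) := by
  rw [card_eq_sum_card_fiberwise (s := {t | proj l t ∈ S}) (t := S) fun t ht => by simpa using ht]
  refine sum_congr rfl fun u hu => ?_
  rw [← card_filter_proj_eq u l, filter_filter]
  congr 1
  exact filter_congr fun t _ => and_iff_right_of_imp fun h => h ▸ hu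

lemma card_le_mul_card_image_proj [Fintype V] [DecidableEq V] (l : List V)
    (s : Finset (IterClone V l)) (k : ℕ) (hk : ∀ u ∈ s.image (proj l), l.count u + 1 ≤ k) :
    #s ≤ k * #(s.image (proj l)) :=
  card_le_mul_card_image s k fun u hu =>
    ((card_le_card (filter_subset_filter _ (subset_univ s))).trans_eq
      (card_filter_proj_eq u l)).trans (hk u hu)

end IterClone

open IterClone

def iterCloneGraph {V : Type} (G : SimpleGraph V) : ∀ l : List V, SimpleGraph (IterClone V l)
  | [] => G
  | x :: l => cloneGraph (iterCloneGraph G l) (orig l x)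

lemma iterCloneGraph_eq_comap {V : Type} (G : SimpleGraph V) :
    ∀ l : List V, iterCloneGraph G l = G.comap (proj l)
  | [] => rfl
  | a :: l => by
    ext x y
    have ih := iterCloneGraph_eq_comap G l
    rcases x with x | x <;> rcases y with y | y
    · show (iterCloneGraph G l).Adj x y ↔ G.Adj (proj l x) (proj l y)
      rw [ih, SimpleGraph.comap_adj]
    · show (iterCloneGraph G l).Adj x (orig l a) ↔ G.Adj (proj l x) a
      rw [ih, SimpleGraph.comap_adj, proj_orig]
    · show (iterCloneGraph G l).Adj (orig l a) y ↔ G.Adj a (proj l y)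
      rw [ih, SimpleGraph.comap_adj, proj_orig]
    · exact iff_of_false id (G.irrefl ·)

lemma ClosedUnderCloning.iterCloneGraph {F : GraphFamily} (hF : ClosedUnderCloning F)
    {V : Type} [Fintype V] {G : SimpleGraph V} (hG : F V G) :
    ∀ l : List V, F (IterClone V l) (iterCloneGraph G l)
  | [] => hG
  | x :: l => hF _ _ (hF.iterCloneGraph hG l) (orig l x)

lemma exists_list_count_eq_ite {V : Type} [DecidableEq V] (A : Finset V) (m : ℕ) :
    ∃ l : List V, ∀ u, l.count u = if u ∈ A then m else 0 := by
  refine ⟨(m • A.val).toList, fun u => ?_⟩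
  rw [← Multiset.coe_count, Multiset.coe_toList, Multiset.count_nsmul,
    Multiset.count_eq_of_nodup A.nodup]
  split_ifs <;> simp_all

lemma exists_homogPair_of_card_le_mul {F : GraphFamily} (hF : ClosedUnderCloning F) {c : ℝ}
    (hc : MightyEHWith F c) {V : Type} [Fintype V] {G : SimpleGraph V} (hG : F V G)
    {A B : Finset V} (hAB : Disjoint A B) {k : ℕ} (hk0 : 0 < k) (hBk : #B ≤ k * #A) :
    ∃ A' ⊆ A, ∃ B' ⊆ B, c * #B ≤ (k * #A' : ℝ) ∧ c * #B ≤ (#B' : ℝ) ∧ HomogPair G A' B' := by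
  classical
  obtain ⟨l, hl⟩ := exists_list_count_eq_ite A (k - 1)
  have hcount_A : ∀ u ∈ A, l.count u + 1 = k := fun u hu => by
    simp only [hl, hu, if_true]; omega
  have hcount_B : ∀ u ∈ B, l.count u = 0 := fun u hu => by
    simp [hl, disjoint_right.1 hAB hu]
  obtain ⟨At, hAt, hAt_card⟩ := exists_subset_card_eq (s := {t | proj l t ∈ A}) (n := #B) (by
    rw [card_filter_proj_mem, sum_congr rfl hcount_A, sum_const, smul_eq_mul, mul_comm]
    exact hBk)
  set Bt : Finset (IterClone V l) := {t | proj l t ∈ B}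
  have hBt_card : #Bt = #B := by
    rw [card_filter_proj_mem, sum_congr rfl fun u hu => by rw [hcount_B u hu]]
    simp
  have hdisj : Disjoint At Bt := disjoint_left.2 fun t htA htB =>
    disjoint_left.1 hAB (mem_filter.1 (hAt htA)).2 (mem_filter.1 htB).2
  obtain ⟨At', hAt', Bt', hBt', hAt'_card, hBt'_card, hhom⟩ :=
    hc _ _ (hF.iterCloneGraph hG l) At Bt hdisj (hBt_card ▸ hAt_card)
  have himA : At'.image (proj l) ⊆ A :=
    image_subset_iff.2 fun t ht => (mem_filter.1 (hAt (hAt' ht))).2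
  have himB : Bt'.image (proj l) ⊆ B := image_subset_iff.2 fun t ht => (mem_filter.1 (hBt' ht)).2
  have hfibA := card_le_mul_card_image_proj l At' k fun u hu => (hcount_A u (himA hu)).le
  have hfibB := card_le_mul_card_image_proj l Bt' 1 fun u hu => by simp [hcount_B u (himB hu)]
  rw [iterCloneGraph_eq_comap] at hhom
  refine ⟨_, himA, _, himB, ?_, ?_, hhom.image_of_comap⟩
  · rw [hAt_card] at hAt'_card
    exact hAt'_card.trans (by exact_mod_cast hfibA)
  · rw [hBt_card] at hBt'_card
    rw [one_mul] at hfibB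
    exact hBt'_card.trans (by exact_mod_cast hfibB)

lemma exists_homogPair_of_card_le {F : GraphFamily} (hF : ClosedUnderCloning F) {c : ℝ}
    (hc : MightyEHWith F c) (hc0 : 0 ≤ c) (hc1 : c ≤ 1) {V : Type} [Fintype V] {G : SimpleGraph V}
    (hG : F V G) {A B : Finset V} (hAB : Disjoint A B) (hle : #A ≤ #B) :
    ∃ A' ⊆ A, ∃ B' ⊆ B, c / 2 * #A ≤ (#A' : ℝ) ∧ c / 2 * #B ≤ (#B' : ℝ) ∧ HomogPair G A' B' := by
  rcases (#A).eq_zero_or_pos with hA | hA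
  · exact ⟨∅, empty_subset _, B, subset_rfl, by simp [hA],
      by nlinarith [(#B).cast_nonneg (α := ℝ)], Or.inl (by simp)⟩
  obtain ⟨k, hk⟩ : ∃ k, k = #B / #A + 1 := ⟨_, rfl⟩
  have hk0 : 0 < k := hk ▸ Nat.succ_pos _
  have hkA : (k * #A : ℝ) ≤ 2 * #B := by
    norm_cast
    rw [hk, add_mul, one_mul]; linarith [Nat.div_mul_le_self #B #A]
  have hBk : #B ≤ k * #A := by
    rw [hk, add_mul, one_mul]; exact (Nat.lt_div_mul_add hA).le
  obtain ⟨A', hA', B', hB', hA'_card, hB'_card, hhom⟩ :=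
    exists_homogPair_of_card_le_mul hF hc hG hAB hk0 hBk
  refine ⟨A', hA', B', hB', ?_, by nlinarith [(#B).cast_nonneg (α := ℝ)], hhom⟩
  have hk : (0 : ℝ) < k := by exact_mod_cast hk0
  have key : (k : ℝ) * (c * #A) ≤ k * (2 * #A') := by nlinarith
  linarith [le_of_mul_le_mul_left key hk]

lemma MightyEHWith.unbalancedMightyEHWith_half {F : GraphFamily} {c : ℝ} (hc : MightyEHWith F c)
    (hF : ClosedUnderCloning F) (hc0 : 0 ≤ c) (hc1 : c ≤ 1) :
    UnbalancedMightyEHWith F (c / 2) := by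
  intro V _ G hG A B hAB
  rcases le_total #A #B with hle | hle
  · exact exists_homogPair_of_card_le hF hc hc0 hc1 hG hAB hle
  · obtain ⟨B', hB', A', hA', hB'_card, hA'_card, hhom⟩ :=
      exists_homogPair_of_card_le hF hc hc0 hc1 hG hAB.symm hle
    exact ⟨A', hA', B', hB', hA'_card, hB'_card, hhom.symm⟩

theorem stmt13_general (F : GraphFamily) (hclone : ClosedUnderCloning F)
    (h : MightyEH F) : UnbalancedMightyEH F := by
  obtain ⟨c, hc, hmighty⟩ := h
  have hmin : MightyEHWith F (min c 1) := MightyEHWith.mono hmighty (min_le_left c 1)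
  have hpos : 0 < min c 1 := lt_min hc one_pos
  exact ⟨min c 1 / 2, half_pos hpos,
    hmin.unbalancedMightyEHWith_half hclone hpos.le (min_le_right c 1)⟩

/-- If a hereditary family of graphs has the mighty Erdős–Hajnal property and is closed under
cloning vertices, then it has the unbalanced mighty Erdős–Hajnal property. -/
theorem stmt13 (F : GraphFamily) (hF : Hereditary F) (hclone : ClosedUnderCloning F)
    (h : MightyEH F) : UnbalancedMightyEH F :=
  stmt13_general F hclone h
end
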